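/- Let μ > 0 and let n > k ≥ 1 be integers. On a probability space, let S, X_1, …, X_{n−1} be mutually independent random variables, each exponentially distributed with rate μ. Let X_{(k)} denote the k-th smallest value among X_1, …, X_{n−1}, and define T = min(S, X_{(k)}). Then E[T] = k/(nμ). -/

import Mathlib

/-!
Writing `q = e^{-μt}`, the request is still running at time `t` exactly when `S > t` and fewer
than `k` of the `X i` are `≤ t`; by independence this has probability
`q · ∑_{j<k} C(n-1, j) (1 - q)^j q^(n-1-j)`. Integrating this tail over `t > 0` gives `E[T]`.
Each summand contributes exactly `1/(nμ)`: integrating by parts against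
`d/dt [(1-q)^(a+1) q^(b+1)]` gives `(a+1) I(a, b+1) = (b+1) I(a+1, b)` for
`I(a, b) = ∫ (1-q)^a q^(b+1)`, so `C(a+b, a) I(a, b)` does not depend on the split of `a + b`
and equals `I(0, a+b) = 1/((a+b+1)μ)`.
-/

open MeasureTheory ProbabilityTheory

/-- The `k`-th smallest value among `Y 0, …, Y (n-1)` (the `k`-th order statistic),
obtained by sorting the multiset of values in nondecreasing order and taking the
`(k-1)`-th entry. -/
noncomputable def kthSmallest {n : ℕ} (Y : Fin n → ℝ) (k : ℕ) : ℝ :=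
  ((Multiset.map Y Finset.univ.val).sort (· ≤ ·)).getD (k - 1) 0

open Real Set Filter Topology
open scoped Finset

theorem List.Pairwise.getElem_le_iff_lt_countP {α : Type*} [LinearOrder α] {l : List α}
    (hl : l.Pairwise (· ≤ ·)) {i : ℕ} (hi : i < l.length) (t : α) :
    l[i] ≤ t ↔ i < l.countP (· ≤ t) := by
  induction l generalizing i with
  | nil => simp at hi
  | cons a l ih =>
    rw [List.pairwise_cons] at hl
    by_cases ha : a ≤ t
    · rw [List.countP_cons_of_pos (by simpa using ha)]
      cases i with
      | zero => simpa using ha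
      | succ i => simpa using ih hl.2 (by simpa using hi)
    · have hmin : ∀ b ∈ a :: l, a ≤ b := by simpa using hl.1
      have hzero : (a :: l).countP (· ≤ t) = 0 :=
        List.countP_eq_zero.mpr fun b hb => by simpa using (ha <| (hmin b hb).trans ·)
      simp only [hzero, Nat.not_lt_zero, iff_false, not_le]
      exact (not_le.mp ha).trans_le (hmin _ (List.getElem_mem hi))

theorem lt_kthSmallest_iff {m : ℕ} (Y : Fin m → ℝ) {k : ℕ} (hk : 1 ≤ k) (hkm : k ≤ m)
    (t : ℝ) :
    t < kthSmallest Y k ↔ #{i | Y i ≤ t} < k := by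
  set l := (Multiset.map Y Finset.univ.val).sort (· ≤ ·)
  have hlen : k - 1 < l.length := by
    simp only [l, Fin.univ_val_map, Multiset.coe_sort, List.length_mergeSort, List.length_ofFn]
    omega
  have hcount : l.countP (· ≤ t) = #{i | Y i ≤ t} := by
    rw [← Multiset.coe_countP, Multiset.sort_eq, Multiset.countP_map]
    rfl
  rw [kthSmallest, List.getD_eq_getElem _ _ hlen, ← not_le,
    (Multiset.pairwise_sort _ _).getElem_le_iff_lt_countP hlen, hcount]
  omega

theorem kthSmallest_nonneg {m : ℕ} {Y : Fin m → ℝ} (hY : ∀ i, 0 ≤ Y i) {k : ℕ}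
    (hk : 1 ≤ k) (hkm : k ≤ m) : 0 ≤ kthSmallest Y k :=
  le_of_forall_lt fun t ht => (lt_kthSmallest_iff Y hk hkm t).mpr <| by
    rw [Finset.filter_false_of_mem fun i _ => not_le.mpr (ht.trans_le (hY i)), Finset.card_empty]
    omega

theorem measurable_card_filter_mem {ι Ω β : Type*} [Fintype ι] [MeasurableSpace Ω]
    [MeasurableSpace β] {Y : ι → Ω → β} (hYm : ∀ i, Measurable (Y i)) {s : Set β}
    (hs : MeasurableSet s) [DecidablePred (· ∈ s)] :
    Measurable fun ω => #{i | Y i ω ∈ s} := by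
  simp_rw [Finset.card_filter]
  exact Finset.measurable_sum _ fun i _ => Measurable.ite (hYm i hs) measurable_const
    measurable_const

theorem measurable_kthSmallest {m k : ℕ} (hk : 1 ≤ k) (hkm : k ≤ m) :
    Measurable fun Y : Fin m → ℝ => kthSmallest Y k := by
  refine measurable_of_Ioi fun t => ?_
  have hpre : (fun Y : Fin m → ℝ => kthSmallest Y k) ⁻¹' Ioi t
      = (fun Y : Fin m → ℝ => #{i | Y i ∈ Iic t}) ⁻¹' Iio k := by
    ext Y
    simp [lt_kthSmallest_iff Y hk hkm]
  rw [hpre]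
  exact measurable_card_filter_mem measurable_pi_apply measurableSet_Iic measurableSet_Iio

theorem setOf_filter_mem_eq_biInter {ι Ω β : Type*} [Fintype ι] (Y : ι → Ω → β)
    (s : Set β) [DecidablePred (· ∈ s)] (A : Finset ι) :
    {ω | ({i | Y i ω ∈ s} : Finset ι) = A}
      = ⋂ i ∈ (Finset.univ : Finset ι), Y i ⁻¹' {x | x ∈ s ↔ i ∈ A} := by
  ext ω
  simp [Finset.ext_iff]

theorem measurableSet_setOf_mem_iff {β : Type*} [MeasurableSpace β] {s : Set β}
    (hs : MeasurableSet s) (q : Prop) :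
    MeasurableSet {x | x ∈ s ↔ q} := by
  by_cases hq : q
  · simp only [hq, iff_true]
    exact hs
  · simp only [hq, iff_false]
    exact hs.compl

namespace ProbabilityTheory

section Binomial

variable {ι Ω β : Type*} [Fintype ι] [MeasurableSpace Ω] [MeasurableSpace β] {P : Measure Ω}
  [IsProbabilityMeasure P] {Y : ι → Ω → β} {s : Set β} [DecidablePred (· ∈ s)]

theorem iIndepFun.measureReal_filter_mem_eq (hY : iIndepFun Y P) (hYm : ∀ i, Measurable (Y i))
    (hs : MeasurableSet s) {p : ℝ} (hp : ∀ i, P.real (Y i ⁻¹' s) = p) (A : Finset ι) :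
    P.real {ω | ({i | Y i ω ∈ s} : Finset ι) = A}
      = p ^ #A * (1 - p) ^ (Fintype.card ι - #A) := by
  classical
  have hfactor :
      ∀ i, P.real (Y i ⁻¹' {x | x ∈ s ↔ i ∈ A}) = if i ∈ A then p else 1 - p := by
    intro i
    split_ifs with hi
    · simp only [hi, iff_true]
      exact hp i
    · simp only [hi, iff_false]
      rw [← Set.compl_def, Set.preimage_compl, probReal_compl_eq_one_sub (hYm i hs), hp i]
  rw [setOf_filter_mem_eq_biInter, measureReal_def,
    hY.measure_inter_preimage_eq_mul _ fun i _ => measurableSet_setOf_mem_iff hs _,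
    ENNReal.toReal_prod]
  simp_rw [← measureReal_def, hfactor]
  rw [Finset.prod_ite, Finset.prod_const, Finset.prod_const, ← Finset.sdiff_eq_filter,
    Finset.card_univ_sdiff, Finset.filter_mem_eq_inter, Finset.univ_inter]

theorem iIndepFun.measureReal_card_filter_mem_eq (hY : iIndepFun Y P)
    (hYm : ∀ i, Measurable (Y i)) (hs : MeasurableSet s) {p : ℝ}
    (hp : ∀ i, P.real (Y i ⁻¹' s) = p) (j : ℕ) :
    P.real {ω | #{i | Y i ω ∈ s} = j}
      = (Fintype.card ι).choose j * p ^ j * (1 - p) ^ (Fintype.card ι - j) := by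
  have hunion : {ω | #{i | Y i ω ∈ s} = j}
      = ⋃ A ∈ Finset.powersetCard j Finset.univ,
          {ω | ({i | Y i ω ∈ s} : Finset ι) = A} := by
    ext ω
    simp
  have hmeas (A : Finset ι) : MeasurableSet {ω | ({i | Y i ω ∈ s} : Finset ι) = A} := by
    rw [setOf_filter_mem_eq_biInter]
    exact Finset.measurableSet_biInter _ fun i _ => hYm i (measurableSet_setOf_mem_iff hs _)
  rw [hunion, measureReal_biUnion_finset (fun A _ B _ hAB => Set.disjoint_left.mpr
      fun ω hA hB => hAB (hA.symm.trans hB)) fun A _ => hmeas A,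
    Finset.sum_congr rfl fun A hA => by
      rw [hY.measureReal_filter_mem_eq hYm hs hp, (Finset.mem_powersetCard.mp hA).2],
    Finset.sum_const, Finset.card_powersetCard, Finset.card_univ, nsmul_eq_mul, mul_assoc]

end Binomial

theorem iIndepFun.indepFun_option_elim {ι Ω β : Type*} [Fintype ι] [MeasurableSpace Ω]
    [MeasurableSpace β] {P : Measure Ω} {S : Ω → β} {X : ι → Ω → β}
    (h : iIndepFun (fun o : Option ι => o.elim S X) P) (hSm : Measurable S)
    (hXm : ∀ i, Measurable (X i)) :
    IndepFun S (fun ω i => X i ω) P := by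
  have h' := h.indepFun_finset {none} (Finset.univ.map Function.Embedding.some) (by simp)
    (by rintro (_ | i); exacts [hSm, hXm i])
  have hφ : Measurable fun v : ↥({none} : Finset (Option ι)) → β =>
      v ⟨none, Finset.mem_singleton_self _⟩ := measurable_pi_apply _
  have hψ : Measurable
      fun (v : ↥(Finset.univ.map Function.Embedding.some : Finset (Option ι)) → β) (i : ι) =>
        v ⟨some i, by simp⟩ :=
    measurable_pi_lambda _ fun i => measurable_pi_apply _
  exact h'.comp hφ hψ

section Exponential

theorem expMeasure_Iio_zero (μ : ℝ) : expMeasure μ (Iio 0) = 0 := by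
  rw [expMeasure, gammaMeasure, withDensity_apply _ measurableSet_Iio]
  exact lintegral_exponentialPDF_of_nonpos le_rfl

theorem ae_nonneg_expMeasure (μ : ℝ) : ∀ᵐ x ∂expMeasure μ, 0 ≤ x := by
  rw [ae_iff]
  simp only [not_le]
  exact expMeasure_Iio_zero μ

variable {μ : ℝ}

theorem expMeasure_real_Iic (hμ : 0 < μ) {t : ℝ} (ht : 0 ≤ t) :
    (expMeasure μ).real (Iic t) = 1 - exp (-(μ * t)) := by
  have := isProbabilityMeasure_expMeasure hμ
  rw [← cdf_eq_real, cdf_expMeasure_eq hμ, if_pos ht]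

theorem expMeasure_real_Ioi (hμ : 0 < μ) {t : ℝ} (ht : 0 ≤ t) :
    (expMeasure μ).real (Ioi t) = exp (-(μ * t)) := by
  have := isProbabilityMeasure_expMeasure hμ
  rw [← compl_Iic, probReal_compl_eq_one_sub measurableSet_Iic, expMeasure_real_Iic hμ ht,
    sub_sub_cancel]

end Exponential

end ProbabilityTheory

section ExpIntegrals

variable {μ : ℝ}

theorem integrableOn_one_sub_exp_pow_mul_exp_pow_succ (hμ : 0 < μ) (a b : ℕ) :
    IntegrableOn (fun t => (1 - exp (-(μ * t))) ^ a * exp (-(μ * t)) ^ (b + 1)) (Ioi 0) := by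
  have hexp : IntegrableOn (fun t => exp (-(μ * t))) (Ioi 0) := by
    simpa using exp_neg_integrableOn_Ioi 0 hμ
  refine hexp.mono' (by fun_prop : Continuous _).aestronglyMeasurable ?_
  filter_upwards [ae_restrict_mem measurableSet_Ioi] with t ht
  have hq0 : 0 ≤ exp (-(μ * t)) := (exp_pos _).le
  have hq1 : exp (-(μ * t)) ≤ 1 := exp_le_one_iff.mpr (by nlinarith [mem_Ioi.mp ht])
  rw [norm_of_nonneg (by positivity [sub_nonneg.mpr hq1])]
  calc (1 - exp (-(μ * t))) ^ a * exp (-(μ * t)) ^ (b + 1)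
      ≤ 1 * exp (-(μ * t)) ^ 1 :=
        mul_le_mul (pow_le_one₀ (by linarith) (by linarith))
          (pow_le_pow_of_le_one hq0 hq1 (by omega)) (by positivity) zero_le_one
    _ = exp (-(μ * t)) := by ring

theorem integral_exp_pow_succ (hμ : 0 < μ) (b : ℕ) :
    ∫ t in Ioi 0, exp (-(μ * t)) ^ (b + 1) = 1 / ((b + 1) * μ) := by
  have hc : -((b + 1) * μ) < 0 := by nlinarith
  have hpow : ∀ t, exp (-(μ * t)) ^ (b + 1) = exp (-((b + 1) * μ) * t) := fun t => by
    rw [← exp_nat_mul]; push_cast; ring_nf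
  simp_rw [hpow, integral_exp_mul_Ioi hc, mul_zero, exp_zero]
  field_simp

theorem hasDerivAt_one_sub_exp_pow_mul_exp_pow (a b : ℕ) (t : ℝ) :
    HasDerivAt (fun t => (1 - exp (-(μ * t))) ^ (a + 1) * exp (-(μ * t)) ^ (b + 1))
      (μ * ((a + 1) * ((1 - exp (-(μ * t))) ^ a * exp (-(μ * t)) ^ (b + 1 + 1))
        - (b + 1) * ((1 - exp (-(μ * t))) ^ (a + 1) * exp (-(μ * t)) ^ (b + 1)))) t := by
  have hq : HasDerivAt (fun t => exp (-(μ * t))) (-μ * exp (-(μ * t))) t := by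
    simpa [mul_comm] using ((hasDerivAt_id t).const_mul μ).neg.exp
  refine (((hq.const_sub 1).fun_pow (a + 1)).fun_mul (hq.fun_pow (b + 1))).congr_deriv ?_
  push_cast [Nat.add_sub_cancel]
  ring

theorem integral_one_sub_exp_pow_mul_exp_pow_recurrence (hμ : 0 < μ) (a b : ℕ) :
    (a + 1) * ∫ t in Ioi 0, (1 - exp (-(μ * t))) ^ a * exp (-(μ * t)) ^ (b + 1 + 1)
      = (b + 1) * ∫ t in Ioi 0, (1 - exp (-(μ * t))) ^ (a + 1) * exp (-(μ * t)) ^ (b + 1) := by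
  have hI₀ := integrableOn_one_sub_exp_pow_mul_exp_pow_succ hμ a (b + 1)
  have hI₁ := integrableOn_one_sub_exp_pow_mul_exp_pow_succ hμ (a + 1) b
  have hlim : Tendsto (fun t => (1 - exp (-(μ * t))) ^ (a + 1) * exp (-(μ * t)) ^ (b + 1))
      atTop (𝓝 0) := by
    have hq : Tendsto (fun t => exp (-(μ * t))) atTop (𝓝 0) :=
      tendsto_exp_atBot.comp (tendsto_neg_atTop_atBot.comp (tendsto_id.const_mul_atTop hμ))
    have hcont : Continuous fun q : ℝ => (1 - q) ^ (a + 1) * q ^ (b + 1) := by fun_prop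
    simpa [Function.comp_def] using (hcont.tendsto 0).comp hq
  have hibp := integral_Ioi_of_hasDerivAt_of_tendsto'
    (fun t _ => hasDerivAt_one_sub_exp_pow_mul_exp_pow a b t)
    (((hI₀.const_mul _).sub (hI₁.const_mul _)).const_mul μ) hlim
  rw [integral_const_mul, integral_sub (hI₀.const_mul _) (hI₁.const_mul _), integral_const_mul,
    integral_const_mul] at hibp
  simp only [mul_zero, neg_zero, exp_zero, sub_self, zero_pow (Nat.succ_ne_zero _),
    zero_mul] at hibp
  exact sub_eq_zero.mp ((mul_eq_zero.mp hibp).resolve_left hμ.ne')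

/-- A Beta integral in disguise: substituting `u = e^{-μt}` gives `B(b + 1, a + 1) / μ`. -/
theorem choose_mul_integral_one_sub_exp_pow_mul_exp_pow (hμ : 0 < μ) (a b : ℕ) :
    (a + b).choose a * ∫ t in Ioi 0, (1 - exp (-(μ * t))) ^ a * exp (-(μ * t)) ^ (b + 1)
      = 1 / ((a + b + 1) * μ) := by
  induction a generalizing b with
  | zero => simpa using integral_exp_pow_succ hμ b
  | succ a ih =>
    have hrec := integral_one_sub_exp_pow_mul_exp_pow_recurrence hμ a b
    have hchoose :
        ((a + 1 + b).choose (a + 1) : ℝ) * (a + 1) = (a + 1 + b).choose a * (b + 1) := by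
      exact_mod_cast (by simpa [show a + 1 + b - a = b + 1 by omega]
        using Nat.choose_succ_right_eq (a + 1 + b) a)
    have hih := ih (b + 1)
    rw [show a + (b + 1) = a + 1 + b by ring] at hih
    push_cast at hih ⊢
    have hb : (0 : ℝ) < b + 1 := by positivity
    apply mul_left_cancel₀ hb.ne'
    linear_combination (-((a + 1 + b).choose (a + 1) : ℝ)) * hrec
      + (∫ t in Ioi 0, (1 - exp (-(μ * t))) ^ a * exp (-(μ * t)) ^ (b + 1 + 1)) * hchoose
      + (b + 1) * hih

end ExpIntegrals

theorem integral_eq_integral_Ioi_measureReal_lt {α : Type*} [MeasurableSpace α]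
    {μ : Measure α} [IsFiniteMeasure μ] {f : α → ℝ} (hf_nn : 0 ≤ᵐ[μ] f)
    (hfm : AEMeasurable f μ) :
    ∫ a, f a ∂μ = ∫ t in Ioi 0, μ.real {a | t < f a} := by
  have htail : Measurable fun t => μ.real {a | t < f a} :=
    Antitone.measurable fun s t hst => measureReal_mono fun a ha => hst.trans_lt ha
  rw [integral_eq_lintegral_of_nonneg_ae hf_nn hfm.aestronglyMeasurable,
    lintegral_eq_lintegral_meas_lt μ hf_nn hfm,
    integral_eq_lintegral_of_nonneg_ae (ae_of_all _ fun _ => measureReal_nonneg)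
      htail.aestronglyMeasurable]
  congr 1
  exact lintegral_congr fun t => (ofReal_measureReal).symm

noncomputable def forkJoinSurvival (μ : ℝ) (m k : ℕ) (t : ℝ) : ℝ :=
  ∑ j ∈ Finset.range k,
    (m.choose j : ℝ) * ((1 - exp (-(μ * t))) ^ j * exp (-(μ * t)) ^ (m - j + 1))

theorem integral_forkJoinSurvival {μ : ℝ} (hμ : 0 < μ) {m k : ℕ} (hkm : k ≤ m + 1) :
    ∫ t in Ioi 0, forkJoinSurvival μ m k t = k / ((m + 1) * μ) := by
  unfold forkJoinSurvival
  rw [integral_finsetSum _ fun j _ =>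
    (integrableOn_one_sub_exp_pow_mul_exp_pow_succ hμ _ _).const_mul _]
  have hterm : ∀ j ∈ Finset.range k, ∫ t in Ioi 0, (m.choose j : ℝ) *
      ((1 - exp (-(μ * t))) ^ j * exp (-(μ * t)) ^ (m - j + 1)) = 1 / ((m + 1) * μ) := by
    intro j hj
    have hjm : j ≤ m := by have := Finset.mem_range.mp hj; omega
    have key := choose_mul_integral_one_sub_exp_pow_mul_exp_pow hμ j (m - j)
    rw [Nat.add_sub_cancel' hjm, Nat.cast_sub hjm, add_sub_cancel] at key
    rw [integral_const_mul, key]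
  rw [Finset.sum_congr rfl hterm, Finset.sum_const, Finset.card_range, nsmul_eq_mul]
  ring

theorem measureReal_lt_min_kthSmallest {Ω : Type*} [MeasurableSpace Ω] {P : Measure Ω}
    [IsProbabilityMeasure P] {μ : ℝ} (hμ : 0 < μ) {m k : ℕ} (hk : 1 ≤ k) (hkm : k ≤ m)
    {S : Ω → ℝ} {X : Fin m → Ω → ℝ} (hSm : Measurable S) (hXm : ∀ i, Measurable (X i))
    (hindep : iIndepFun (fun o : Option (Fin m) => o.elim S X) P)
    (hS : P.map S = expMeasure μ) (hX : ∀ i, P.map (X i) = expMeasure μ) {t : ℝ}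
    (ht : 0 ≤ t) :
    P.real {ω | t < min (S ω) (kthSmallest (fun i => X i ω) k)} = forkJoinSurvival μ m k t := by
  have hXind : iIndepFun X P := by
    have := hindep.precomp (Option.some_injective (Fin m))
    exact this
  have hsplit : {ω | t < min (S ω) (kthSmallest (fun i => X i ω) k)}
      = S ⁻¹' Ioi t ∩ (fun ω i => X i ω) ⁻¹' {Y | t < kthSmallest Y k} := by
    ext ω
    simp
  have hcount : (fun ω i => X i ω) ⁻¹' {Y | t < kthSmallest Y k}
      = ⋃ j ∈ Finset.range k, {ω | #{i | X i ω ∈ Iic t} = j} := by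
    ext ω
    simp [lt_kthSmallest_iff _ hk hkm]
  have hS_t : P.real (S ⁻¹' Ioi t) = exp (-(μ * t)) := by
    rw [← map_measureReal_apply hSm measurableSet_Ioi, hS, expMeasure_real_Ioi hμ ht]
  have hX_t : ∀ i, P.real (X i ⁻¹' Iic t) = 1 - exp (-(μ * t)) := fun i => by
    rw [← map_measureReal_apply (hXm i) measurableSet_Iic, hX i, expMeasure_real_Iic hμ ht]
  rw [hsplit, measureReal_def, (hindep.indepFun_option_elim hSm hXm).measure_inter_preimage_eq_mul
      _ _ measurableSet_Ioi (measurableSet_lt measurable_const (measurable_kthSmallest hk hkm)),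
    ENNReal.toReal_mul, ← measureReal_def, ← measureReal_def, hS_t, hcount,
    measureReal_biUnion_finset (fun i _ j _ hij => Set.disjoint_left.mpr fun ω hi hj =>
      hij (hi.symm.trans hj)) fun j _ => ?_, forkJoinSurvival, Finset.mul_sum]
  · refine Finset.sum_congr rfl fun j _ => ?_
    rw [hXind.measureReal_card_filter_mem_eq hXm measurableSet_Iic hX_t, Fintype.card_fin]
    ring
  · exact measurable_card_filter_mem hXm measurableSet_Iic (measurableSet_singleton j)

/-- **Expected download time for an (n,k)-MDS code, low-traffic regime.**
`S, X 0, …, X (n-2)` are mutually independent `Exp(μ)` service times; the request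
completes at `T = min(S, X_{(k)})` where `X_{(k)}` is the `k`-th smallest of the
`X i`. Then `E[T] = k/(nμ)`. -/
theorem expected_download_time_MDS
    {Ω : Type*} [MeasurableSpace Ω] (Pr : Measure Ω) [IsProbabilityMeasure Pr]
    (μ : ℝ) (hμ : 0 < μ) (n k : ℕ) (hk : 1 ≤ k) (hkn : k < n)
    (S : Ω → ℝ) (X : Fin (n - 1) → Ω → ℝ)
    (hSm : Measurable S) (hXm : ∀ i, Measurable (X i))
    (hindep : iIndepFun
      (fun o : Option (Fin (n - 1)) => o.elim S X) Pr)
    (hS : Pr.map S = expMeasure μ)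
    (hX : ∀ i, Pr.map (X i) = expMeasure μ)
    (T : Ω → ℝ)
    (hT : T = fun ω => min (S ω) (kthSmallest (fun i => X i ω) k)) :
    ∫ ω, T ω ∂Pr = (k : ℝ) / ((n : ℝ) * μ) := by
  subst hT
  have hkm : k ≤ n - 1 := by omega
  have hS_nn : ∀ᵐ ω ∂Pr, 0 ≤ S ω :=
    ae_of_ae_map hSm.aemeasurable (by rw [hS]; exact ae_nonneg_expMeasure μ)
  have hX_nn : ∀ᵐ ω ∂Pr, ∀ i, 0 ≤ X i ω := ae_all_iff.mpr fun i =>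
    ae_of_ae_map (hXm i).aemeasurable (by rw [hX i]; exact ae_nonneg_expMeasure μ)
  have hT_nn : 0 ≤ᵐ[Pr] fun ω => min (S ω) (kthSmallest (fun i => X i ω) k) := by
    filter_upwards [hS_nn, hX_nn] with ω hSω hXω
    exact le_min hSω (kthSmallest_nonneg hXω hk hkm)
  have hTm : Measurable fun ω => min (S ω) (kthSmallest (fun i => X i ω) k) :=
    hSm.min ((measurable_kthSmallest hk hkm).comp (measurable_pi_lambda _ hXm))
  rw [integral_eq_integral_Ioi_measureReal_lt hT_nn hTm.aemeasurable,
    setIntegral_congr_fun measurableSet_Ioi fun t ht =>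
      measureReal_lt_min_kthSmallest hμ hk hkm hSm hXm hindep hS hX (le_of_lt ht),
    integral_forkJoinSurvival hμ (by omega), Nat.cast_pred (by omega), sub_add_cancel]
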